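/- Let A be a finite-dimensional formally real Jordan algebra with an associative inner product ⟨·,·⟩. Then the Jordan curvature is non-positive: for all linearly independent X, Y in A, ⟨R(X,Y)X, Y⟩ ≤ 0, where R(X,Y)Z = ∇_{XY}Z − ∇_X∇_Y Z − ∇_Y∇_X Z and ∇_X Y = ½XY. -/

import Mathlib

/-!
Write `L_a` for multiplication by `a`. Since `∇_X Y = ½ XY`, associativity of the inner product
gives `⟪R(X,Y)X, Y⟫ = ¼ (⟪XY, XY⟫ - ⟪X², Y²⟫) = -¼ ⟪(L_{Y²} - L_Y²) X, X⟫`, so it suffices that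
`L_{Y²} - L_Y²` is positive. This operator is symmetric and, by the Jordan identity, commutes with
`L_Y`; hence each of its eigenspaces contains an eigenvector `w` of `L_Y`, say `Yw = αw`, and on
`w` it acts as `L_{(Y - αE)²}`. Finally every `L_{a²}` is positive: power-associativity makes
`p ↦ p(a)` multiplicative, Lagrange interpolation on the spectrum of `L_a` writes
`a² = ∑ α² c_α` with idempotents `c_α`, and multiplication by an idempotent has only the
eigenvalues `0, ½, 1`.
-/

open RealInnerProductSpace Polynomial

section JordanAlgebra

variable {V : Type*} [AddCommGroup V] [Module ℝ V] {mul : V →ₗ[ℝ] V →ₗ[ℝ] V}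

theorem jordan_linearized (comm : ∀ X Y : V, mul X Y = mul Y X)
    (jordan : ∀ X Y : V, mul X (mul (mul X X) Y) = mul (mul X X) (mul X Y)) (x z y : V) :
    mul z (mul (mul x x) y) + (2 : ℝ) • mul x (mul (mul x z) y)
      = mul (mul x x) (mul z y) + (2 : ℝ) • mul (mul x z) (mul x y) := by
  have h₁ := jordan (x + z) y
  have h₂ := jordan (x - z) y
  have h₃ := jordan z y
  simp only [map_add, map_sub, LinearMap.add_apply, LinearMap.sub_apply, comm z x] at h₁ h₂
  linear_combination (norm := module) (1 / 2 : ℝ) • h₁ - (1 / 2 : ℝ) • h₂ - h₃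

theorem commute_mul_mul_self
    (jordan : ∀ X Y : V, mul X (mul (mul X X) Y) = mul (mul X X) (mul X Y)) (x : V) :
    Commute (mul x) (mul (mul x x)) :=
  LinearMap.ext (jordan x)

variable (mul) in
def jpow (E x : V) (n : ℕ) : V := (mul x ^ n) E

theorem jpow_zero (E x : V) : jpow mul E x 0 = E := rfl

theorem jpow_succ (E x : V) (n : ℕ) : jpow mul E x (n + 1) = mul x (jpow mul E x n) := by
  rw [jpow, pow_succ', Module.End.mul_apply]; rfl

theorem jpow_one (comm : ∀ X Y : V, mul X Y = mul Y X) {E : V} (hE : ∀ X : V, mul E X = X)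
    (x : V) : jpow mul E x 1 = x := by
  rw [jpow_succ, jpow_zero, comm, hE]

theorem mul_self_mul_jpow (comm : ∀ X Y : V, mul X Y = mul Y X)
    (jordan : ∀ X Y : V, mul X (mul (mul X X) Y) = mul (mul X X) (mul X Y))
    {E : V} (hE : ∀ X : V, mul E X = X) (x : V) :
    ∀ n, mul (mul x x) (jpow mul E x n) = jpow mul E x (n + 2)
  | 0 => by rw [jpow_zero, comm, hE, jpow_succ, jpow_one comm hE]
  | n + 1 => by rw [jpow_succ, ← jordan, mul_self_mul_jpow comm jordan hE x n, ← jpow_succ]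

theorem mul_jpow_add_two (comm : ∀ X Y : V, mul X Y = mul Y X)
    (jordan : ∀ X Y : V, mul X (mul (mul X X) Y) = mul (mul X X) (mul X Y))
    {E : V} (hE : ∀ X : V, mul E X = X) (x : V) (n : ℕ) :
    mul (jpow mul E x (n + 2)) = mul (mul x x) * mul (jpow mul E x n)
      + (2 : ℝ) • (mul (jpow mul E x (n + 1)) * mul x - mul x * mul (jpow mul E x n) * mul x) := by
  ext u
  have h := jordan_linearized comm jordan x u (jpow mul E x n)
  rw [mul_self_mul_jpow comm jordan hE, ← jpow_succ, comm u, comm u, comm (mul x u),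
    comm (mul x u)] at h
  simp only [LinearMap.add_apply, LinearMap.smul_apply, LinearMap.sub_apply, Module.End.mul_apply]
  linear_combination (norm := module) h

theorem commute_mul_jpow (comm : ∀ X Y : V, mul X Y = mul Y X)
    (jordan : ∀ X Y : V, mul X (mul (mul X X) Y) = mul (mul X X) (mul X Y))
    {E : V} (hE : ∀ X : V, mul E X = X) (x : V) :
    ∀ n, Commute (mul x) (mul (jpow mul E x n)) ∧ Commute (mul (mul x x)) (mul (jpow mul E x n))
  | 0 => by
    rw [jpow_zero, show mul E = 1 from LinearMap.ext hE]
    exact ⟨Commute.one_right _, Commute.one_right _⟩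
  | 1 => by
    rw [jpow_one comm hE]
    exact ⟨Commute.refl _, (commute_mul_mul_self jordan x).symm⟩
  | n + 2 => by
    obtain ⟨h₁, h₂⟩ := commute_mul_jpow comm jordan hE x n
    obtain ⟨h₃, h₄⟩ := commute_mul_jpow comm jordan hE x (n + 1)
    have h₅ := commute_mul_mul_self jordan x
    rw [mul_jpow_add_two comm jordan hE]
    constructor <;>
      apply_rules [Commute.add_right, Commute.sub_right, Commute.smul_right, Commute.mul_right,
        Commute.refl, Commute.symm]

theorem jpow_mul_jpow (comm : ∀ X Y : V, mul X Y = mul Y X)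
    (jordan : ∀ X Y : V, mul X (mul (mul X X) Y) = mul (mul X X) (mul X Y))
    {E : V} (hE : ∀ X : V, mul E X = X) (x : V) :
    ∀ m n, mul (jpow mul E x m) (jpow mul E x n) = jpow mul E x (m + n)
  | 0, n => by rw [jpow_zero, hE, Nat.zero_add]
  | m + 1, n => by
    have h := LinearMap.congr_fun (commute_mul_jpow comm jordan hE x n).1 (jpow mul E x m)
    simp only [Module.End.mul_apply] at h
    rw [jpow_succ, comm, ← h, comm (jpow mul E x n), jpow_mul_jpow comm jordan hE x m n,
      ← jpow_succ, Nat.add_right_comm]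

theorem mul_aeval_apply_aeval_apply (comm : ∀ X Y : V, mul X Y = mul Y X)
    (jordan : ∀ X Y : V, mul X (mul (mul X X) Y) = mul (mul X X) (mul X Y))
    {E : V} (hE : ∀ X : V, mul E X = X) (x : V) (p q : ℝ[X]) :
    mul (aeval (mul x) p E) (aeval (mul x) q E) = aeval (mul x) (p * q) E := by
  induction p using Polynomial.induction_on' with
  | add p₁ p₂ h₁ h₂ => simp only [add_mul, map_add, LinearMap.add_apply, h₁, h₂]
  | monomial m a =>
    induction q using Polynomial.induction_on' with
    | add q₁ q₂ h₁ h₂ => simp only [mul_add, map_add, LinearMap.add_apply, h₁, h₂]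
    | monomial n b =>
      simp only [monomial_mul_monomial, aeval_monomial, Module.End.mul_apply,
        Module.algebraMap_end_apply, map_smul, LinearMap.smul_apply, smul_smul]
      rw [mul_comm b a]
      exact congrArg _ (jpow_mul_jpow comm jordan hE x m n)

end JordanAlgebra

namespace LinearMap.IsSymmetric

open Module.End

variable {E : Type*} [NormedAddCommGroup E] [InnerProductSpace ℝ E] [FiniteDimensional ℝ E]
  {T : E →ₗ[ℝ] E}

theorem aeval_eq_zero_of_forall_hasEigenvalue (hT : T.IsSymmetric) {p : ℝ[X]}
    (hp : ∀ μ, HasEigenvalue T μ → p.eval μ = 0) : aeval T p = 0 := by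
  refine (hT.eigenvectorBasis rfl).toBasis.ext fun i ↦ ?_
  rw [OrthonormalBasis.coe_toBasis, aeval_apply_of_hasEigenvector
    (hT.hasEigenvector_eigenvectorBasis rfl i), hp _ (hT.hasEigenvalue_eigenvalues rfl i),
    zero_smul, LinearMap.zero_apply]

theorem isPositive_of_forall_hasEigenvalue (hT : T.IsSymmetric)
    (h : ∀ μ, HasEigenvalue T μ → 0 ≤ μ) : T.IsPositive := by
  refine (T.isPositive_iff).2 ⟨hT, fun v ↦ ?_⟩
  let b := hT.eigenvectorBasis rfl
  rw [← b.sum_inner_mul_inner (T v) v]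
  refine Finset.sum_nonneg fun i _ ↦ ?_
  rw [hT, hT.apply_eigenvectorBasis, real_inner_smul_right, mul_assoc, real_inner_comm]
  exact mul_nonneg (h _ (hT.hasEigenvalue_eigenvalues rfl i)) (mul_self_nonneg _)

theorem exists_hasEigenvector_of_commute {S : E →ₗ[ℝ] E} (hS : S.IsSymmetric)
    (hTS : Commute T S) {μ : ℝ} (hμ : HasEigenvalue T μ) :
    ∃ (γ : ℝ) (w : E), HasEigenvector T μ w ∧ S w = γ • w := by
  by_contra! h
  refine hasEigenvalue_iff.1 hμ ?_
  rw [← iSup_eigenspace_inf_eigenspace_of_commute hS hTS, iSup_eq_bot]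
  refine fun γ ↦ (Submodule.eq_bot_iff _).2 fun w ⟨hwT, hwS⟩ ↦ ?_
  by_contra hw
  exact h γ w ⟨hwT, hw⟩ (mem_eigenspace_iff.1 hwS)

end LinearMap.IsSymmetric

section EuclideanJordanAlgebra

open Module.End

variable {V : Type*} [NormedAddCommGroup V] [InnerProductSpace ℝ V] {mul : V →ₗ[ℝ] V →ₗ[ℝ] V}

theorem isSymmetric_mul (comm : ∀ X Y : V, mul X Y = mul Y X)
    (assoc : ∀ X Y Z : V, ⟪mul X Y, Z⟫ = ⟪X, mul Y Z⟫) (w : V) : (mul w).IsSymmetric :=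
  fun v z ↦ by rw [comm w v, assoc]

variable [FiniteDimensional ℝ V]

theorem isPositive_mul_of_mul_self_eq (comm : ∀ X Y : V, mul X Y = mul Y X)
    (jordan : ∀ X Y : V, mul X (mul (mul X X) Y) = mul (mul X X) (mul X Y))
    (assoc : ∀ X Y Z : V, ⟪mul X Y, Z⟫ = ⟪X, mul Y Z⟫) {c : V} (hc : mul c c = c) :
    (mul c).IsPositive := by
  refine (isSymmetric_mul comm assoc c).isPositive_of_forall_hasEigenvalue fun μ hμ ↦ ?_
  obtain ⟨v, hv, hv₀⟩ := hμ.exists_hasEigenvector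
  have hcv : mul c v = μ • v := mem_eigenspace_iff.1 hv
  have h₁ : ⟪c, mul v v⟫ = μ * ⟪v, v⟫ := by rw [← assoc, hcv, real_inner_smul_left]
  have h₂ : ⟪c, mul c (mul v v)⟫ = μ * ⟪v, v⟫ := by rw [← assoc, hc, h₁]
  have h := congrArg (inner ℝ c) (jordan_linearized comm jordan c v v)
  simp only [hc, hcv, map_smul, LinearMap.smul_apply, inner_add_right, real_inner_smul_right,
    h₁, h₂] at h
  have hvv : 0 < ⟪v, v⟫ := real_inner_self_pos.2 hv₀
  -- the Peirce eigenvalues `0, ½, 1`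
  have hμ' : μ * ((2 * μ - 1) * (μ - 1)) * ⟪v, v⟫ = 0 := by linear_combination -h
  rcases mul_eq_zero.1 ((mul_eq_zero.1 hμ').resolve_right hvv.ne') with h | h
  · exact h.ge
  · nlinarith

theorem exists_mul_self_eq_sum_smul_idempotent (comm : ∀ X Y : V, mul X Y = mul Y X)
    (jordan : ∀ X Y : V, mul X (mul (mul X X) Y) = mul (mul X X) (mul X Y))
    {E : V} (hE : ∀ X : V, mul E X = X) (assoc : ∀ X Y Z : V, ⟪mul X Y, Z⟫ = ⟪X, mul Y Z⟫)
    (a : V) :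
    ∃ (S : Finset ℝ) (c : ℝ → V), (∀ α ∈ S, mul (c α) (c α) = c α)
      ∧ mul a a = ∑ α ∈ S, α ^ 2 • c α := by
  let S := (finite_hasEigenvalue (mul a)).toFinset
  have hS : ∀ p q : ℝ[X], (∀ α ∈ S, p.eval α = q.eval α) → aeval (mul a) p = aeval (mul a) q := by
    refine fun p q hpq ↦ sub_eq_zero.1 ?_
    rw [← map_sub]
    refine (isSymmetric_mul comm assoc a).aeval_eq_zero_of_forall_hasEigenvalue fun μ hμ ↦ ?_
    rw [eval_sub, hpq μ ((finite_hasEigenvalue _).mem_toFinset.2 hμ), sub_self]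
  have hinj : Set.InjOn id (S : Set ℝ) := Function.injective_id.injOn
  refine ⟨S, fun α ↦ aeval (mul a) (Lagrange.basis S id α) E, fun α hα ↦ ?_, ?_⟩
  · rw [mul_aeval_apply_aeval_apply comm jordan hE]
    refine congrArg (· E) (hS _ _ fun β hβ ↦ ?_)
    rcases eq_or_ne α β with rfl | hne
    · have h : eval α (Lagrange.basis S id α) = 1 := Lagrange.eval_basis_self hinj hα
      rw [eval_mul, h, mul_one]
    · have h : eval β (Lagrange.basis S id α) = 0 := Lagrange.eval_basis_of_ne (v := id) hne hβ
      rw [eval_mul, h, mul_zero]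
  · have hX : aeval (mul a) (X ^ 2 : ℝ[X]) E = mul a a := by
      rw [aeval_X_pow, pow_two, Module.End.mul_apply, comm a E, hE]
    have hinterp :
        aeval (mul a) (X ^ 2 : ℝ[X]) = aeval (mul a) (Lagrange.interpolate S id (· ^ 2)) :=
      hS _ _ fun β hβ ↦ by
        rw [eval_X_pow]; exact (Lagrange.eval_interpolate_at_node (· ^ 2) hinj hβ).symm
    rw [← hX, hinterp, Lagrange.interpolate_apply, map_sum, LinearMap.sum_apply]
    refine Finset.sum_congr rfl fun α _ ↦ ?_
    rw [map_mul, aeval_C, Module.End.mul_apply, Module.algebraMap_end_apply]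

theorem isPositive_mul_mul_self (comm : ∀ X Y : V, mul X Y = mul Y X)
    (jordan : ∀ X Y : V, mul X (mul (mul X X) Y) = mul (mul X X) (mul X Y))
    {E : V} (hE : ∀ X : V, mul E X = X) (assoc : ∀ X Y Z : V, ⟪mul X Y, Z⟫ = ⟪X, mul Y Z⟫)
    (a : V) : (mul (mul a a)).IsPositive := by
  obtain ⟨S, c, hc, ha⟩ := exists_mul_self_eq_sum_smul_idempotent comm jordan hE assoc a
  rw [ha, map_sum]
  refine LinearMap.isPositive_sum S fun α hα ↦ ?_
  rw [map_smul]
  exact (isPositive_mul_of_mul_self_eq comm jordan assoc (hc α hα)).smul_of_nonneg (sq_nonneg α)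

theorem isPositive_mul_mul_self_sub_mul_mul (comm : ∀ X Y : V, mul X Y = mul Y X)
    (jordan : ∀ X Y : V, mul X (mul (mul X X) Y) = mul (mul X X) (mul X Y))
    {E : V} (hE : ∀ X : V, mul E X = X) (assoc : ∀ X Y Z : V, ⟪mul X Y, Z⟫ = ⟪X, mul Y Z⟫)
    (Y : V) : (mul (mul Y Y) - mul Y * mul Y).IsPositive := by
  have hL := isSymmetric_mul comm assoc
  have hT : (mul (mul Y Y) - mul Y * mul Y).IsSymmetric :=
    (hL _).sub ((hL Y).mul_of_commute (hL Y) (Commute.refl _))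
  have hYT : Commute (mul (mul Y Y) - mul Y * mul Y) (mul Y) :=
    ((commute_mul_mul_self jordan Y).sub_right ((Commute.refl _).mul_right (Commute.refl _))).symm
  refine hT.isPositive_of_forall_hasEigenvalue fun μ hμ ↦ ?_
  obtain ⟨α, w, hw, hYw⟩ := (hL Y).exists_hasEigenvector_of_commute hYT hμ
  have hTw : mul (mul Y Y) w - mul Y (mul Y w) = μ • w := mem_eigenspace_iff.1 hw.1
  rw [hYw, map_smul, hYw] at hTw
  have hz : mul (mul (Y - α • E) (Y - α • E)) w = μ • w := by
    simp only [map_sub, map_smul, LinearMap.sub_apply, LinearMap.smul_apply, hE, comm Y E, hYw]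
    linear_combination (norm := module) hTw
  exact eigenvalue_nonneg_of_nonneg
    (hasEigenvalue_of_hasEigenvector ⟨mem_eigenspace_iff.2 hz, hw.2⟩)
    (isPositive_mul_mul_self comm jordan hE assoc _).inner_nonneg_right

theorem inner_mul_mul_self_le (comm : ∀ X Y : V, mul X Y = mul Y X)
    (jordan : ∀ X Y : V, mul X (mul (mul X X) Y) = mul (mul X X) (mul X Y))
    {E : V} (hE : ∀ X : V, mul E X = X) (assoc : ∀ X Y Z : V, ⟪mul X Y, Z⟫ = ⟪X, mul Y Z⟫)
    (X Y : V) : ⟪mul X Y, mul X Y⟫ ≤ ⟪mul X X, mul Y Y⟫ := by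
  have h := (isPositive_mul_mul_self_sub_mul_mul comm jordan hE assoc Y).inner_nonneg_left X
  have h₁ : ⟪mul (mul Y Y) X, X⟫ = ⟪mul X X, mul Y Y⟫ := by rw [assoc, real_inner_comm]
  have h₂ : ⟪mul Y (mul Y X), X⟫ = ⟪mul X Y, mul X Y⟫ := by
    rw [isSymmetric_mul comm assoc, comm Y X]
  rw [LinearMap.sub_apply, Module.End.mul_apply, inner_sub_left, h₁, h₂] at h
  linarith

end EuclideanJordanAlgebra

theorem formally_real_nonpos_curvature
    {V : Type*} [NormedAddCommGroup V] [InnerProductSpace ℝ V] [FiniteDimensional ℝ V]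
    (mul : V →ₗ[ℝ] V →ₗ[ℝ] V)
    (comm : ∀ X Y : V, mul X Y = mul Y X)
    (jordan : ∀ X Y : V, mul X (mul (mul X X) Y) = mul (mul X X) (mul X Y))
    (E : V) (hE : ∀ X : V, mul E X = X)
    (assoc : ∀ X Y Z : V, ⟪mul X Y, Z⟫ = ⟪X, mul Y Z⟫)
    (D : V → V → V) (hD : ∀ X Y : V, D X Y = (1/2 : ℝ) • mul X Y)
    (R : V → V → V → V)
    (hR : ∀ X Y Z : V, R X Y Z = D (mul X Y) Z - D X (D Y Z) - D Y (D X Z)) :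
    ∀ X Y : V, LinearIndependent ℝ ![X, Y] → ⟪R X Y X, Y⟫ ≤ 0 := by
  intro X Y _
  have hRXYX : R X Y X = (1/2 : ℝ) • mul (mul X Y) X - (1/4 : ℝ) • mul X (mul Y X)
      - (1/4 : ℝ) • mul Y (mul X X) := by
    simp only [hR, hD, map_smul]
    module
  have h₁ : ⟪mul (mul X Y) X, Y⟫ = ⟪mul X Y, mul X Y⟫ := assoc _ _ _
  have h₂ : ⟪mul X (mul Y X), Y⟫ = ⟪mul X Y, mul X Y⟫ := by
    rw [comm Y X, isSymmetric_mul comm assoc X]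
  have h₃ : ⟪mul Y (mul X X), Y⟫ = ⟪mul X X, mul Y Y⟫ := by rw [comm Y, assoc]
  rw [hRXYX, inner_sub_left, inner_sub_left, real_inner_smul_left, real_inner_smul_left,
    real_inner_smul_left, h₁, h₂, h₃]
  linarith [inner_mul_mul_self_le comm jordan hE assoc X Y]
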